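/- Quantum adiabatic theorem (special case, eigenvalue 0): with assumptions as below, ‖φ(1) − ψ(1)‖ ≤ (1/T)·[(2‖H'‖ + ‖H''‖)/λ² + 4‖H'‖²/λ³]; in particular ‖φ(1) − ψ(1)‖ ≤ ε whenever T ≥ (1/ε)·[(2‖H'‖+‖H''‖)/λ² + 4‖H'‖²/λ³]. -/

import Mathlib

/-!
The corrected trajectory `φ + (i/T) q`, where `q(s) ⊥ φ(s)` solves `H(s) q(s) = φ'(s)`, satisfies
the Schrödinger equation up to the source term `(i/T) q'`. Since `-i T H(s)` is skew-adjoint, the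
error `e = φ + (i/T) q - ψ` grows at most like `∫ ‖(i/T) q'‖`, so `‖φ(1) - ψ(1)‖` is at most
`(‖q(0)‖ + ‖q(1)‖ + max ‖q'‖) / T`. The spectral gap inverts `H(s)` on `φ(s)ᗮ` with norm `1/λ`,
which gives `‖φ'‖ ≤ ‖H'‖/λ`, `‖q‖ ≤ ‖H'‖/λ²`, and, after differentiating `H q = φ'`, `⟪φ, q⟫ = 0`
and `H φ = 0` twice, `‖q'‖ ≤ ‖H''‖/λ² + 4‖H'‖²/λ³`.
-/

open InnerProductSpace Set

section LinearAlgebra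

variable {𝕜 E : Type*} [RCLike 𝕜] [NormedAddCommGroup E] [InnerProductSpace 𝕜 E]
  {K : E →L[𝕜] E} {x : E}

namespace LinearMap.IsSymmetric

theorem mul_norm_le_norm_apply_of_mem_orthogonal_ker [FiniteDimensional 𝕜 E]
    (hK : (K : E →ₗ[𝕜] E).IsSymmetric) {lam : ℝ} (hlam : 0 ≤ lam)
    (hgap : ∀ μ ∈ spectrum 𝕜 K, μ ≠ 0 → lam ≤ ‖μ‖) {u : E}
    (hu : u ∈ (LinearMap.ker (K : E →ₗ[𝕜] E))ᗮ) :
    lam * ‖u‖ ≤ ‖K u‖ := by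
  have : CompleteSpace E := FiniteDimensional.complete 𝕜 E
  let b := hK.eigenvectorBasis rfl
  let μ := hK.eigenvalues rfl
  have hb : ∀ i, K (b i) = (μ i : 𝕜) • b i := hK.apply_eigenvectorBasis rfl
  have hcoef : ∀ i, lam * ‖⟪b i, u⟫_𝕜‖ ≤ ‖⟪b i, K u⟫_𝕜‖ := by
    intro i
    rw [← hK.apply_clm, hb, inner_smul_left, RCLike.conj_ofReal, norm_mul, RCLike.norm_ofReal]
    by_cases hμ : μ i = 0
    · have hker : b i ∈ LinearMap.ker (K : E →ₗ[𝕜] E) := by simp [hb, hμ]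
      simp [Submodule.inner_right_of_mem_orthogonal hker hu]
    · have hspec : (μ i : 𝕜) ∈ spectrum 𝕜 K := by
        rw [ContinuousLinearMap.spectrum_eq]
        exact (hK.hasEigenvalue_eigenvalues rfl i).mem_spectrum
      have := hgap _ hspec (by exact_mod_cast hμ)
      rw [RCLike.norm_ofReal] at this
      exact mul_le_mul_of_nonneg_right this (norm_nonneg _)
  have hsq : (lam * ‖u‖) ^ 2 ≤ ‖K u‖ ^ 2 := by
    rw [mul_pow, ← b.sum_sq_norm_inner_right, ← b.sum_sq_norm_inner_right, Finset.mul_sum]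
    refine Finset.sum_le_sum fun i _ => ?_
    rw [← mul_pow]
    exact pow_le_pow_left₀ (by positivity) (hcoef i) 2
  exact (pow_le_pow_iff_left₀ (by positivity) (norm_nonneg _) two_ne_zero).mp hsq

theorem apply_eq_and_inner_eq_zero_of_add_rankOne_self_apply
    (hK : (K : E →ₗ[𝕜] E).IsSymmetric) (hKx : K x = 0) {v w : E} (hv : ⟪x, v⟫_𝕜 = 0)
    (hw : (K + rankOne 𝕜 x x) w = v) :
    K w = v ∧ ⟪x, w⟫_𝕜 = 0 := by
  have hxw : ⟪x, w⟫_𝕜 * ⟪x, x⟫_𝕜 = 0 := by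
    simpa [← hw, inner_add_right, inner_smul_right, ← hK.apply_clm, hKx] using hv
  have hxw' : ⟪x, w⟫_𝕜 = 0 := by
    rcases mul_eq_zero.1 hxw with h | h
    · exact h
    · rw [inner_self_eq_zero.1 h, inner_zero_left]
  exact ⟨by simpa [hxw'] using hw, hxw'⟩

theorem isUnit_add_rankOne_self [FiniteDimensional 𝕜 E] (hK : (K : E →ₗ[𝕜] E).IsSymmetric)
    (hKx : K x = 0) (hker : LinearMap.ker (K : E →ₗ[𝕜] E) ≤ 𝕜 ∙ x) :
    IsUnit (K + rankOne 𝕜 x x) := by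
  have : CompleteSpace E := FiniteDimensional.complete 𝕜 E
  have hinj : Function.Injective (K + rankOne 𝕜 x x) := by
    rw [← ContinuousLinearMap.coe_coe, ← LinearMap.ker_eq_bot, Submodule.eq_bot_iff]
    intro w hw
    obtain ⟨hKw, hxw⟩ := hK.apply_eq_and_inner_eq_zero_of_add_rankOne_self_apply hKx
      (inner_zero_right x) hw
    exact (Submodule.mem_bot 𝕜).1 <| (Submodule.inf_orthogonal_eq_bot (𝕜 ∙ x)) ▸
      ⟨hker hKw, Submodule.mem_orthogonal_singleton_iff_inner_right.2 hxw⟩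
  rw [ContinuousLinearMap.isUnit_iff_bijective]
  exact ⟨hinj, LinearMap.injective_iff_surjective.1 hinj⟩

theorem norm_le_of_apply_eq_sub (hK : (K : E →ₗ[𝕜] E).IsSymmetric) (hKx : K x = 0)
    (hx : ‖x‖ = 1) {lam : ℝ} (hlam : 0 < lam)
    (hgap : ∀ u ∈ (𝕜 ∙ x)ᗮ, lam * ‖u‖ ≤ ‖K u‖) {v y z : E} (hv : K v = y - z) :
    ‖v‖ ≤ ‖⟪x, v⟫_𝕜‖ + ‖K y‖ / lam ^ 2 + ‖z‖ / lam := by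
  set Q := (𝕜 ∙ x)ᗮ.starProjection
  have hKQ : ∀ u, K (Q u) = K u := fun u => by
    simp [Q, Submodule.starProjection_unit_singleton 𝕜 hx, hKx]
  have hgapQ : ∀ u, lam * ‖Q u‖ ≤ ‖K u‖ := fun u =>
    hKQ u ▸ hgap _ (Submodule.starProjection_apply_mem _ u)
  have hKv : K v ∈ (𝕜 ∙ x)ᗮ := by
    rw [Submodule.mem_orthogonal_singleton_iff_inner_right, ← hK.apply_clm, hKx, inner_zero_left]
  have hQy : ‖Q y‖ ≤ ‖K y‖ / lam := by
    rw [le_div_iff₀ hlam, mul_comm]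
    exact hgapQ y
  have hQv : ‖Q v‖ ≤ ‖K y‖ / lam ^ 2 + ‖z‖ / lam := by
    have : lam * ‖Q v‖ ≤ ‖K y‖ / lam + ‖z‖ :=
      calc lam * ‖Q v‖ ≤ ‖Q (K v)‖ := by
            rw [Submodule.starProjection_eq_self_iff.2 hKv]; exact hgapQ v
        _ ≤ ‖Q y‖ + ‖Q z‖ := by rw [hv, map_sub]; exact norm_sub_le _ _
        _ ≤ ‖K y‖ / lam + ‖z‖ := add_le_add hQy (Submodule.norm_starProjection_apply_le _ z)
    rw [sq, ← div_div, ← add_div, le_div_iff₀ hlam, mul_comm]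
    exact this
  calc ‖v‖ = ‖(𝕜 ∙ x).starProjection v + Q v‖ := by
        rw [Submodule.starProjection_add_starProjection_orthogonal]
    _ ≤ ‖⟪x, v⟫_𝕜‖ + ‖Q v‖ := by
        refine (norm_add_le _ _).trans_eq ?_
        rw [Submodule.starProjection_unit_singleton 𝕜 hx, norm_smul, hx, mul_one]
    _ ≤ ‖⟪x, v⟫_𝕜‖ + ‖K y‖ / lam ^ 2 + ‖z‖ / lam := by
        rw [add_assoc]
        exact add_le_add_right hQv _

end LinearMap.IsSymmetric

end LinearAlgebra

section RestrictScalars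

variable {𝕜 E F : Type*} [NontriviallyNormedField 𝕜] [NormedAlgebra ℝ 𝕜]
  [NormedAddCommGroup E] [NormedSpace 𝕜 E] [NormedSpace ℝ E] [IsScalarTower ℝ 𝕜 E]
  [NormedAddCommGroup F] [NormedSpace 𝕜 F] [NormedSpace ℝ F] [IsScalarTower ℝ 𝕜 F]
  {c : ℝ → E →L[𝕜] F} {c' : E →L[𝕜] F} {u : ℝ → E} {u' : E} {x : ℝ}

theorem HasDerivAt.clm_apply_of_isScalarTower (hc : HasDerivAt c c' x) (hu : HasDerivAt u u' x) :
    HasDerivAt (fun y => c y (u y)) (c' (u x) + c x u') x :=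
  (((ContinuousLinearMap.restrictScalarsL 𝕜 E F ℝ ℝ).hasFDerivAt.comp_hasDerivAt x hc).clm_apply
    hu :)

theorem apply_deriv_eq_of_forall_apply_eq {v : ℝ → F} {v' : F} (hc : HasDerivAt c c' x)
    (hu : HasDerivAt u u' x) (hv : HasDerivAt v v' x) (h : ∀ y, c y (u y) = v y) :
    c x u' = v' - c' (u x) := by
  rw [← funext h] at hv
  rw [← (hc.clm_apply_of_isScalarTower hu).unique hv, add_sub_cancel_left]

end RestrictScalars

theorem isBoundedBilinearMap_rankOne {E F : Type*} [NormedAddCommGroup E] [NormedSpace ℂ E]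
    [NormedAddCommGroup F] [InnerProductSpace ℂ F] :
    IsBoundedBilinearMap ℝ fun p : E × F => rankOne ℂ p.1 p.2 where
  add_left x₁ x₂ y := by simp
  smul_left c x y := by ext; simp
  add_right x y₁ y₂ := by simp
  smul_right c x y := by ext; simp [← Complex.coe_smul, smul_smul]
  bound := ⟨1, one_pos, fun x y => by simp [mul_comm]⟩

theorem norm_le_norm_add_mul_of_re_inner_deriv_le {𝕜 F : Type*} [RCLike 𝕜]
    [NormedAddCommGroup F] [InnerProductSpace 𝕜 F] [NormedSpace ℝ F] [IsScalarTower ℝ 𝕜 F]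
    {f f' : ℝ → F} {a b C : ℝ} (hab : a ≤ b) (hC : 0 ≤ C)
    (hf : ∀ s ∈ Icc a b, HasDerivAt f (f' s) s)
    (hbound : ∀ s ∈ Ioo a b, RCLike.re ⟪f s, f' s⟫_𝕜 ≤ C * ‖f s‖) :
    ‖f b‖ ≤ ‖f a‖ + C * (b - a) := by
  refine le_of_forall_pos_le_add fun δ hδ => ?_
  -- `‖f‖` need not be differentiable where `f` vanishes, but `√(‖f‖² + δ²)` is.
  set u : ℝ → ℝ := fun s => √(‖f s‖ ^ 2 + δ ^ 2)
  have hpos : ∀ s, 0 < u s := fun s => Real.sqrt_pos.2 (by positivity)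
  have hnorm_le : ∀ s, ‖f s‖ ≤ u s := fun s =>
    Real.le_sqrt_of_sq_le (le_add_of_nonneg_right (sq_nonneg δ))
  have hu : ∀ s ∈ Icc a b, HasDerivAt u (RCLike.re ⟪f s, f' s⟫_𝕜 / u s) s := by
    intro s hs
    have hsq : HasDerivAt (fun t => ‖f t‖ ^ 2) (2 * RCLike.re ⟪f s, f' s⟫_𝕜) s := by
      have := RCLike.reCLM.hasFDerivAt.comp_hasDerivAt s ((hf s hs).inner 𝕜 (hf s hs))
      simp only [Function.comp_def, RCLike.reCLM_apply, inner_self_eq_norm_sq, map_add] at this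
      refine this.congr_deriv ?_
      rw [← inner_conj_symm (f s) (f' s), RCLike.conj_re]
      ring
    exact ((hsq.add_const (δ ^ 2)).sqrt (by positivity)).congr_deriv
      (mul_div_mul_left _ _ two_ne_zero)
  have hderiv : ∀ s ∈ interior (Icc a b), deriv u s ≤ C := by
    rw [interior_Icc]
    intro s hs
    rw [(hu s (Ioo_subset_Icc_self hs)).deriv, div_le_iff₀ (hpos s)]
    exact (hbound s hs).trans (mul_le_mul_of_nonneg_left (hnorm_le s) hC)
  have hmvt := (convex_Icc a b).image_sub_le_mul_sub_of_deriv_le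
    (fun s hs => (hu s hs).continuousAt.continuousWithinAt)
    (fun s hs => (hu s (interior_subset hs)).differentiableAt.differentiableWithinAt)
    hderiv a (left_mem_Icc.2 hab) b (right_mem_Icc.2 hab) hab
  have hua : u a ≤ ‖f a‖ + δ :=
    Real.sqrt_le_iff.2 ⟨by positivity, by nlinarith [norm_nonneg (f a)]⟩
  linarith [hnorm_le b]

section Adiabatic

variable {E : Type*} [NormedAddCommGroup E] [InnerProductSpace ℂ E]
  {H : ℝ → E →L[ℂ] E} {φ : ℝ → E}

theorem exists_differentiable_preimage [FiniteDimensional ℂ E] {v : ℝ → E}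
    (hH : Differentiable ℝ H) (hφ : Differentiable ℝ φ) (hv : Differentiable ℝ v)
    (hsymm : ∀ s, (H s : E →ₗ[ℂ] E).IsSymmetric) (heig : ∀ s, H s (φ s) = 0)
    (hker : ∀ s, LinearMap.ker (H s : E →ₗ[ℂ] E) ≤ ℂ ∙ φ s) (hφv : ∀ s, ⟪φ s, v s⟫_ℂ = 0) :
    ∃ q : ℝ → E, Differentiable ℝ q ∧ ∀ s, H s (q s) = v s ∧ ⟪φ s, q s⟫_ℂ = 0 := by
  -- `H s` is singular, but `H s + |φ s⟩⟨φ s|` is invertible and agrees with `H s` on `φ(s)ᗮ`.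
  set A : ℝ → E →L[ℂ] E := fun s => H s + rankOne ℂ (φ s) (φ s)
  have hA : ∀ s, IsUnit (A s) := fun s => (hsymm s).isUnit_add_rankOne_self (heig s) (hker s)
  refine ⟨fun s => Ring.inverse (A s) (v s), fun s => ?_, fun s => ?_⟩
  · have hP : DifferentiableAt ℝ (fun s => rankOne ℂ (φ s) (φ s)) s := by
      have := (isBoundedBilinearMap_rankOne (E := E) (F := E)).differentiableAt (φ s, φ s)
      exact this.comp s ((hφ s).prodMk (hφ s))
    have hAd : DifferentiableAt ℝ A s := (hH s).add hP
    exact ((hAd.inverse (hA s)).hasDerivAt.clm_apply_of_isScalarTower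
      (hv s).hasDerivAt).differentiableAt
  · refine (hsymm s).apply_eq_and_inner_eq_zero_of_add_rankOne_self_apply (heig s) (hφv s) ?_
    change (A s * Ring.inverse (A s)) (v s) = v s
    rw [Ring.mul_inverse_cancel _ (hA s)]
    rfl

theorem norm_eigenvector_sub_solution_le {φ' ψ q : ℝ → E} {T B a b : ℝ} (hT : 0 < T)
    (hab : a ≤ b) (hsymm : ∀ s, (H s : E →ₗ[ℂ] E).IsSymmetric)
    (hφ : ∀ s, HasDerivAt φ (φ' s) s) (heig : ∀ s, H s (φ s) = 0)
    (hq : Differentiable ℝ q) (hHq : ∀ s, H s (q s) = φ' s)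
    (hq' : ∀ s ∈ Icc a b, ‖deriv q s‖ ≤ B)
    (hψ : ∀ s, HasDerivAt ψ ((-Complex.I * (T : ℂ)) • H s (ψ s)) s) (hψa : ψ a = φ a) :
    ‖φ b - ψ b‖ ≤ (‖q a‖ + ‖q b‖ + B * (b - a)) / T := by
  set c : ℂ := Complex.I / T
  have hc : (-Complex.I * T) * c = 1 := by
    have hT' : (T : ℂ) ≠ 0 := by exact_mod_cast hT.ne'
    calc (-Complex.I * T) * c = -(Complex.I * Complex.I) * (T / T) := by ring
      _ = 1 := by rw [Complex.I_mul_I, div_self hT', neg_neg, one_mul]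
  have hcn : ‖c‖ = 1 / T := by simp [c, abs_of_pos hT]
  set e : ℝ → E := fun s => φ s + c • q s - ψ s
  have he : ∀ s, HasDerivAt e (c • deriv q s + (-Complex.I * T) • H s (e s)) s := by
    intro s
    refine (((hφ s).add ((hq s).hasDerivAt.const_smul c)).sub (hψ s)).congr_deriv ?_
    simp only [e, map_sub, map_add, map_smul, heig, hHq, zero_add, smul_sub, smul_smul, hc,
      one_smul]
    abel
  have hB : 0 ≤ B := (norm_nonneg _).trans (hq' a ⟨le_rfl, hab⟩)
  have hbound : ∀ s ∈ Ioo a b,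
      RCLike.re ⟪e s, c • deriv q s + (-Complex.I * T) • H s (e s)⟫_ℂ ≤ B / T * ‖e s‖ := by
    intro s hs
    have hskew : RCLike.re ⟪e s, (-Complex.I * T) • H s (e s)⟫_ℂ = 0 := by
      simpa [inner_smul_right] using Or.inr ((hsymm s).im_inner_self_apply (e s))
    rw [inner_add_right, map_add, hskew, add_zero]
    calc RCLike.re ⟪e s, c • deriv q s⟫_ℂ ≤ ‖e s‖ * ‖c • deriv q s‖ :=
          (RCLike.re_le_norm _).trans (norm_inner_le_norm _ _)
      _ ≤ ‖e s‖ * (B / T) := by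
          rw [norm_smul, hcn, one_div_mul_eq_div]
          gcongr
          exact hq' s (Ioo_subset_Icc_self hs)
      _ = B / T * ‖e s‖ := mul_comm _ _
  have hdiss := norm_le_norm_add_mul_of_re_inner_deriv_le hab (by positivity) (fun s _ => he s)
    hbound
  have hea : e a = c • q a := by simp [e, hψa]
  have hφψ : φ b - ψ b = e b - c • q b := by simp only [e]; abel
  calc ‖φ b - ψ b‖ ≤ ‖e b‖ + ‖c‖ * ‖q b‖ := by
        rw [hφψ, ← norm_smul]; exact norm_sub_le _ _
    _ ≤ ‖c‖ * ‖q a‖ + B / T * (b - a) + ‖c‖ * ‖q b‖ := by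
        rw [hea, norm_smul] at hdiss; gcongr
    _ = (‖q a‖ + ‖q b‖ + B * (b - a)) / T := by rw [hcn]; ring

theorem norm_deriv_le_of_eigenvector {H' : ℝ → E →L[ℂ] E} {φ' : ℝ → E} {lam M1 s : ℝ}
    (hlam : 0 < lam) (hHd : ∀ s, HasDerivAt H (H' s) s) (hφd : ∀ s, HasDerivAt φ (φ' s) s)
    (hunit : ∀ s, ‖φ s‖ = 1) (heig : ∀ s, H s (φ s) = 0) (hφφ' : ∀ s, ⟪φ s, φ' s⟫_ℂ = 0)
    (hgap : ∀ s, ∀ u ∈ (ℂ ∙ φ s)ᗮ, lam * ‖u‖ ≤ ‖H s u‖) (hM1 : ‖H' s‖ ≤ M1) :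
    ‖φ' s‖ ≤ M1 / lam := by
  rw [le_div_iff₀ hlam, mul_comm]
  calc lam * ‖φ' s‖ ≤ ‖H s (φ' s)‖ :=
        hgap s _ (Submodule.mem_orthogonal_singleton_iff_inner_right.2 (hφφ' s))
    _ = ‖H' s (φ s)‖ := by
        simpa using congrArg norm
          (apply_deriv_eq_of_forall_apply_eq (hHd s) (hφd s) (hasDerivAt_const s 0) heig)
    _ ≤ M1 := by simpa [hunit] using (H' s).le_of_opNorm_le hM1 (φ s)

theorem norm_preimage_le_and_norm_deriv_le {H' H'' : ℝ → E →L[ℂ] E} {φ' φ'' q : ℝ → E}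
    {lam M1 M2 s : ℝ} (hlam : 0 < lam) (hsymm : ∀ s, (H s : E →ₗ[ℂ] E).IsSymmetric)
    (hHd : ∀ s, HasDerivAt H (H' s) s) (hHd2 : ∀ s, HasDerivAt H' (H'' s) s)
    (hφd : ∀ s, HasDerivAt φ (φ' s) s) (hφd2 : ∀ s, HasDerivAt φ' (φ'' s) s)
    (hunit : ∀ s, ‖φ s‖ = 1) (heig : ∀ s, H s (φ s) = 0) (hφφ' : ∀ s, ⟪φ s, φ' s⟫_ℂ = 0)
    (hgap : ∀ s, ∀ u ∈ (ℂ ∙ φ s)ᗮ, lam * ‖u‖ ≤ ‖H s u‖)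
    (hq : Differentiable ℝ q) (hHq : ∀ s, H s (q s) = φ' s) (hφq : ∀ s, ⟪φ s, q s⟫_ℂ = 0)
    (hM1 : ‖H' s‖ ≤ M1) (hM2 : ‖H'' s‖ ≤ M2) :
    ‖q s‖ ≤ M1 / lam ^ 2 ∧ ‖deriv q s‖ ≤ M2 / lam ^ 2 + 4 * M1 ^ 2 / lam ^ 3 := by
  have hM1₀ : 0 ≤ M1 := (norm_nonneg _).trans hM1
  have hHφ' : ∀ t, H t (φ' t) = -H' t (φ t) := fun t => by
    simpa using apply_deriv_eq_of_forall_apply_eq (hHd t) (hφd t) (hasDerivAt_const t 0) heig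
  have hHφ'' : H s (φ'' s) = -(H'' s (φ s) + H' s (φ' s)) - H' s (φ' s) :=
    apply_deriv_eq_of_forall_apply_eq (hHd s) (hφd2 s)
      ((hHd2 s).clm_apply_of_isScalarTower (hφd s)).neg hHφ'
  have hHq' : H s (deriv q s) = φ'' s - H' s (q s) :=
    apply_deriv_eq_of_forall_apply_eq (hHd s) (hq s).hasDerivAt (hφd2 s) hHq
  have hφq' : ⟪φ s, deriv q s⟫_ℂ = -⟪φ' s, q s⟫_ℂ := by
    have h₀ : HasDerivAt (fun t => ⟪φ t, q t⟫_ℂ) 0 s := by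
      simpa only [hφq] using hasDerivAt_const s (0 : ℂ)
    exact eq_neg_of_add_eq_zero_left (((hφd s).inner ℂ (hq s).hasDerivAt).unique h₀)
  have hφ' : ‖φ' s‖ ≤ M1 / lam :=
    norm_deriv_le_of_eigenvector hlam hHd hφd hunit heig hφφ' hgap hM1
  have hqs : ‖q s‖ ≤ M1 / lam ^ 2 := by
    rw [sq, ← div_div, le_div_iff₀ hlam, mul_comm]
    calc lam * ‖q s‖ ≤ ‖H s (q s)‖ :=
          hgap s _ (Submodule.mem_orthogonal_singleton_iff_inner_right.2 (hφq s))
      _ ≤ M1 / lam := by rw [hHq]; exact hφ'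
  refine ⟨hqs, ?_⟩
  have h₁ : ‖⟪φ s, deriv q s⟫_ℂ‖ ≤ M1 / lam * (M1 / lam ^ 2) := by
    rw [hφq', norm_neg]
    exact (norm_inner_le_norm _ _).trans (mul_le_mul hφ' hqs (norm_nonneg _) (by positivity))
  have hH'φ' : ‖H' s (φ' s)‖ ≤ M1 * (M1 / lam) :=
    ((H' s).le_of_opNorm_le hM1 _).trans (mul_le_mul_of_nonneg_left hφ' hM1₀)
  have h₂ : ‖H s (φ'' s)‖ ≤ M2 + M1 * (M1 / lam) + M1 * (M1 / lam) := by
    rw [hHφ'']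
    refine (norm_sub_le _ _).trans (add_le_add ((norm_neg _).trans_le ?_) hH'φ')
    refine (norm_add_le _ _).trans (add_le_add ?_ hH'φ')
    simpa [hunit] using (H'' s).le_of_opNorm_le hM2 (φ s)
  have h₃ : ‖H' s (q s)‖ ≤ M1 * (M1 / lam ^ 2) :=
    ((H' s).le_of_opNorm_le hM1 _).trans (mul_le_mul_of_nonneg_left hqs hM1₀)
  calc ‖deriv q s‖
      ≤ ‖⟪φ s, deriv q s⟫_ℂ‖ + ‖H s (φ'' s)‖ / lam ^ 2 + ‖H' s (q s)‖ / lam :=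
        (hsymm s).norm_le_of_apply_eq_sub (heig s) (hunit s) hlam (hgap s) hHq'
    _ ≤ M1 / lam * (M1 / lam ^ 2) + (M2 + M1 * (M1 / lam) + M1 * (M1 / lam)) / lam ^ 2
        + M1 * (M1 / lam ^ 2) / lam := by gcongr
    _ = M2 / lam ^ 2 + 4 * M1 ^ 2 / lam ^ 3 := by field_simp; ring

end Adiabatic

theorem stmt_10_general {n : ℕ} (T : ℝ) (hT : 0 < T)
    (H H' H'' : ℝ → EuclideanSpace ℂ (Fin n) →L[ℂ] EuclideanSpace ℂ (Fin n))
    (φ φ' φ'' : ℝ → EuclideanSpace ℂ (Fin n))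
    (ψ : ℝ → EuclideanSpace ℂ (Fin n))
    (lam M1 M2 : ℝ)
    (hlam : 0 < lam)
    (hherm : ∀ s, IsSelfAdjoint (H s))
    (hHd : ∀ s, HasDerivAt H (H' s) s)
    (hHd2 : ∀ s, HasDerivAt H' (H'' s) s)
    (hφd : ∀ s, HasDerivAt φ (φ' s) s)
    (hφd2 : ∀ s, HasDerivAt φ' (φ'' s) s)
    (hunit : ∀ s, ‖φ s‖ = 1)
    (heig : ∀ s, H s (φ s) = 0)
    (horth : ∀ s, ⟪φ' s, φ s⟫_ℂ = 0)
    -- `0` is a non-degenerate eigenvalue of `H(s)`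
    (hnondeg : ∀ s, ∀ v, H s v = 0 → ∃ c : ℂ, v = c • φ s)
    -- and all other eigenvalues of `H(s)` are at least `λ` in absolute value
    (hgap : ∀ s, ∀ μ ∈ spectrum ℂ (H s), μ ≠ 0 → lam ≤ ‖μ‖)
    -- `‖H'‖ ≤ M1`, `‖H''‖ ≤ M2` on `[0,1]`
    (hM1 : ∀ s ∈ Set.Icc (0:ℝ) 1, ‖H' s‖ ≤ M1)
    (hM2 : ∀ s ∈ Set.Icc (0:ℝ) 1, ‖H'' s‖ ≤ M2)
    -- Schrödinger equation `i ψ'(s) = T H(s) ψ(s)`, `ψ(0) = φ(0)`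
    (hψ : ∀ s, HasDerivAt ψ ((-Complex.I * (T : ℂ)) • (H s (ψ s))) s)
    (hψ0 : ψ 0 = φ 0) :
    ‖φ 1 - ψ 1‖ ≤ (1 / T) * ((2 * M1 + M2) / lam ^ 2 + 4 * M1 ^ 2 / lam ^ 3)
    ∧ ∀ ε > 0, (1 / ε) * ((2 * M1 + M2) / lam ^ 2 + 4 * M1 ^ 2 / lam ^ 3) ≤ T →
        ‖φ 1 - ψ 1‖ ≤ ε := by
  have hsymm := fun s => (hherm s).isSymmetric
  have hker : ∀ s, LinearMap.ker (H s).toLinearMap ≤ ℂ ∙ φ s := fun s v hv => by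
    obtain ⟨c, rfl⟩ := hnondeg s v hv
    exact Submodule.smul_mem _ c (Submodule.mem_span_singleton_self _)
  have hgap' : ∀ s, ∀ u ∈ (ℂ ∙ φ s)ᗮ, lam * ‖u‖ ≤ ‖H s u‖ := fun s u hu =>
    (hsymm s).mul_norm_le_norm_apply_of_mem_orthogonal_ker hlam.le (hgap s)
      (Submodule.orthogonal_le (hker s) hu)
  have hφφ' : ∀ s, ⟪φ s, φ' s⟫_ℂ = 0 := fun s => by rw [← inner_conj_symm, horth, map_zero]
  obtain ⟨q, hq, hHq⟩ := exists_differentiable_preimage (fun s => (hHd s).differentiableAt)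
    (fun s => (hφd s).differentiableAt) (fun s => (hφd2 s).differentiableAt) hsymm heig hker hφφ'
  have hbounds := fun s (hs : s ∈ Icc (0 : ℝ) 1) => norm_preimage_le_and_norm_deriv_le hlam
    hsymm hHd hHd2 hφd hφd2 hunit heig hφφ' hgap' hq (fun s => (hHq s).1) (fun s => (hHq s).2)
    (hM1 s hs) (hM2 s hs)
  have hmain : ‖φ 1 - ψ 1‖ ≤ (1 / T) * ((2 * M1 + M2) / lam ^ 2 + 4 * M1 ^ 2 / lam ^ 3) := by
    refine (norm_eigenvector_sub_solution_le hT zero_le_one hsymm hφd heig hq (fun s => (hHq s).1)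
      (fun s hs => (hbounds s hs).2) hψ hψ0).trans ?_
    have hq0 := (hbounds 0 (left_mem_Icc.2 zero_le_one)).1
    have hq1 := (hbounds 1 (right_mem_Icc.2 zero_le_one)).1
    calc _ ≤ (M1 / lam ^ 2 + M1 / lam ^ 2
            + (M2 / lam ^ 2 + 4 * M1 ^ 2 / lam ^ 3) * (1 - 0)) / T := by gcongr
      _ = _ := by ring
  refine ⟨hmain, fun ε hε hεT => hmain.trans ?_⟩
  rw [one_div_mul_eq_div, div_le_iff₀ hε] at hεT
  rw [one_div_mul_eq_div, div_le_iff₀ hT]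
  linarith

/-- Quantum adiabatic theorem (special case, eigenvalue 0):
`‖φ(1) - ψ(1)‖ ≤ (1/T) ((2‖H'‖ + ‖H''‖)/λ² + 4‖H'‖²/λ³)`; in particular
`‖φ(1) - ψ(1)‖ ≤ ε` whenever `T ≥ (1/ε) ((2‖H'‖ + ‖H''‖)/λ² + 4‖H'‖²/λ³)`. -/
theorem stmt_10 {n : ℕ} (T : ℝ) (hT : 0 < T)
    (H H' H'' : ℝ → EuclideanSpace ℂ (Fin n) →L[ℂ] EuclideanSpace ℂ (Fin n))
    (φ φ' φ'' : ℝ → EuclideanSpace ℂ (Fin n))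
    (ψ : ℝ → EuclideanSpace ℂ (Fin n))
    (lam M1 M2 : ℝ)
    (hlam : 0 < lam)
    (hherm : ∀ s, IsSelfAdjoint (H s))
    (hHd : ∀ s, HasDerivAt H (H' s) s)
    (hHd2 : ∀ s, HasDerivAt H' (H'' s) s)
    (hH'cont : Continuous H') (hH''cont : Continuous H'')
    (hφd : ∀ s, HasDerivAt φ (φ' s) s)
    (hφd2 : ∀ s, HasDerivAt φ' (φ'' s) s)
    (hunit : ∀ s, ‖φ s‖ = 1)
    (heig : ∀ s, H s (φ s) = 0)
    (horth : ∀ s, ⟪φ' s, φ s⟫_ℂ = 0)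
    -- `0` is a non-degenerate eigenvalue of `H(s)`
    (hnondeg : ∀ s, ∀ v, H s v = 0 → ∃ c : ℂ, v = c • φ s)
    -- and all other eigenvalues of `H(s)` are at least `λ` in absolute value
    (hgap : ∀ s, ∀ μ ∈ spectrum ℂ (H s), μ ≠ 0 → lam ≤ ‖μ‖)
    -- `‖H'‖ ≤ M1`, `‖H''‖ ≤ M2` on `[0,1]`
    (hM1 : ∀ s ∈ Set.Icc (0:ℝ) 1, ‖H' s‖ ≤ M1)
    (hM2 : ∀ s ∈ Set.Icc (0:ℝ) 1, ‖H'' s‖ ≤ M2)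
    -- Schrödinger equation `i ψ'(s) = T H(s) ψ(s)`, `ψ(0) = φ(0)`
    (hψ : ∀ s, HasDerivAt ψ ((-Complex.I * (T : ℂ)) • (H s (ψ s))) s)
    (hψ0 : ψ 0 = φ 0) :
    ‖φ 1 - ψ 1‖ ≤ (1 / T) * ((2 * M1 + M2) / lam ^ 2 + 4 * M1 ^ 2 / lam ^ 3)
    ∧ ∀ ε > 0, (1 / ε) * ((2 * M1 + M2) / lam ^ 2 + 4 * M1 ^ 2 / lam ^ 3) ≤ T →
        ‖φ 1 - ψ 1‖ ≤ ε :=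
  stmt_10_general T hT H H' H'' φ φ' φ'' ψ lam M1 M2 hlam hherm hHd hHd2 hφd hφd2 hunit heig horth
    hnondeg hgap hM1 hM2 hψ hψ0
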